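/- arXiv:2411.16024 — 4 statements merged into one kernel-verified Lean document; each statement's English description precedes it below -/
import Mathlib

section
/- (Single Branch MTD stealth attack) Suppose H' = H + Δb·G where G = [H_k]_{·,{2,…,n+1}} is the single-branch perturbation matrix for an edge e_k with f(e_k) ≠ 1 and t(e_k) ≠ 1, and Δb ∈ ℝ is arbitrary. Then for every c ∈ ℝⁿ with c_{f(e_k)−1} = c_{t(e_k)−1}, it holds that H c = H' c; consequently the attack a = H c satisfies the stealth conditions r'(y + a) = r'(y) and K'(y + a) = K'y + c for all y, where K' = (H'ᵀ W H')⁻¹ H'ᵀ W and r'(y) = ‖y − H'K'y‖². -/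
open Matrix

lemma aux_sum_zero (l n : ℕ)
    (A : Matrix (Fin l) (Fin (n + 1)) ℝ)
    (k : Fin l) (fk tk : Fin (n + 1)) (hft : fk ≠ tk)
    (hAf : A k fk = 1) (hAt : A k tk = -1)
    (hA0 : ∀ j, j ≠ fk → j ≠ tk → A k j = 0)
    (hf : fk ≠ 0) (ht : tk ≠ 0)
    (c : Fin n → ℝ) (hc : c (fk.pred hf) = c (tk.pred ht)) :
    ∑ j : Fin n, A k (Fin.succ j) * c j = 0 := by
  have hne : fk.pred hf ≠ tk.pred ht := by
    intro h
    apply hft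
    rw [← Fin.succ_pred fk hf, ← Fin.succ_pred tk ht, h]
  have hsub : ∑ j : Fin n, A k (Fin.succ j) * c j
      = ∑ j ∈ ({fk.pred hf, tk.pred ht} : Finset (Fin n)), A k (Fin.succ j) * c j := by
    refine (Finset.sum_subset (Finset.subset_univ _) ?_).symm
    intro j _ hj
    simp only [Finset.mem_insert, Finset.mem_singleton, not_or] at hj
    have h1 : Fin.succ j ≠ fk := by
      intro h; apply hj.1; subst h; simp
    have h2 : Fin.succ j ≠ tk := by
      intro h; apply hj.2; subst h; simp
    rw [hA0 _ h1 h2, zero_mul]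
  rw [hsub, Finset.sum_pair hne, Fin.succ_pred, Fin.succ_pred, hAf, hAt, hc]
  ring

/-- Single Branch MTD stealth attack. With H' = H + Δb·G where G is
the single-branch perturbation matrix of an edge avoiding the reference bus, any
c with c_{f(e_k)−1} = c_{t(e_k)−1} satisfies Hc = H'c; the attack a = Hc leaves
the WLS residual unchanged and shifts the estimate by c. -/
theorem single_branch_mtd_stealth (l n : ℕ)
    (A : Matrix (Fin l) (Fin (n + 1)) ℝ)
    (k : Fin l) (fk tk : Fin (n + 1)) (hft : fk ≠ tk)
    (hAf : A k fk = 1) (hAt : A k tk = -1)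
    (hA0 : ∀ j, j ≠ fk → j ≠ tk → A k j = 0)
    (hf : fk ≠ 0) (ht : tk ≠ 0)
    (H G H' : Matrix (Fin (n + 1) ⊕ (Fin l ⊕ Fin l)) (Fin n) ℝ)
    (Δb : ℝ)
    (hG : G = (Matrix.fromRows (Aᵀ * Matrix.single k k (1 : ℝ) * A)
        (Matrix.fromRows (Matrix.single k k (1 : ℝ) * A)
          (-(Matrix.single k k (1 : ℝ) * A)))).submatrix id Fin.succ)
    (hH' : H' = H + Δb • G)
    (w : Fin (n + 1) ⊕ (Fin l ⊕ Fin l) → ℝ) (hw : ∀ i, 0 < w i)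
    (W : Matrix (Fin (n + 1) ⊕ (Fin l ⊕ Fin l)) (Fin (n + 1) ⊕ (Fin l ⊕ Fin l)) ℝ)
    (hW : W = Matrix.diagonal w)
    (hinv : IsUnit (H'ᵀ * W * H'))
    (K' : Matrix (Fin n) (Fin (n + 1) ⊕ (Fin l ⊕ Fin l)) ℝ)
    (hK' : K' = (H'ᵀ * W * H')⁻¹ * H'ᵀ * W)
    (r' : ((Fin (n + 1) ⊕ (Fin l ⊕ Fin l)) → ℝ) → ℝ)
    (hr' : r' = fun y => (y - H'.mulVec (K'.mulVec y)) ⬝ᵥ (y - H'.mulVec (K'.mulVec y)))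
    (c : Fin n → ℝ) (hc : c (fk.pred hf) = c (tk.pred ht)) :
    H.mulVec c = H'.mulVec c ∧
    (∀ y, r' (y + H.mulVec c) = r' y) ∧
    (∀ y, K'.mulVec (y + H.mulVec c) = K'.mulVec y + c) := by
  have hsum : ∑ j : Fin n, A k (Fin.succ j) * c j = 0 :=
    aux_sum_zero l n A k fk tk hft hAf hAt hA0 hf ht c hc
  -- stdBasisMatrix multiplication
  have hSA : (Matrix.single k k (1:ℝ) * A)
      = Matrix.of (fun q j => if q = k then A k j else 0) := by
    funext q j
    simp [Matrix.mul_apply, Matrix.single, ite_and, eq_comm]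
  -- G.mulVec c = 0
  have hGc : G.mulVec c = 0 := by
    funext i
    rw [hG]
    simp only [Matrix.mulVec, dotProduct, Matrix.submatrix_apply, id]
    rcases i with p | q
    · simp only [Matrix.fromRows_apply_inl]
      have : ∀ j : Fin n, (Aᵀ * Matrix.single k k (1:ℝ) * A) p (Fin.succ j)
          = A k p * A k (Fin.succ j) := by
        intro j
        rw [Matrix.mul_assoc, Matrix.mul_apply]
        simp [hSA, Matrix.transpose_apply, Finset.sum_ite_eq', mul_comm]
      simp only [this, mul_assoc, ← Finset.mul_sum, hsum, mul_zero, Pi.zero_apply]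
    · rcases q with q | q
      · simp only [Matrix.fromRows_apply_inr, Matrix.fromRows_apply_inl, hSA, Matrix.of_apply]
        by_cases hq : q = k
        · subst hq
          simpa using hsum
        · simp [hq]
      · simp only [Matrix.fromRows_apply_inr, Matrix.neg_apply, hSA, Matrix.of_apply]
        by_cases hq : q = k
        · subst hq
          simpa using hsum
        · simp [hq]
  have hH'c : H'.mulVec c = H.mulVec c := by
    rw [hH', Matrix.add_mulVec, Matrix.smul_mulVec, hGc, smul_zero, add_zero]
  have hdet : IsUnit (H'ᵀ * W * H').det := (Matrix.isUnit_iff_isUnit_det _).mp hinv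
  have hKH : K' * H' = 1 := by
    rw [hK', Matrix.mul_assoc, Matrix.mul_assoc, ← Matrix.mul_assoc H'ᵀ W H',
      Matrix.nonsing_inv_mul _ hdet]
  have hKc : K'.mulVec (H.mulVec c) = c := by
    rw [← hH'c, Matrix.mulVec_mulVec, hKH, Matrix.one_mulVec]
  refine ⟨hH'c.symm, ?_, ?_⟩
  · intro y
    rw [hr']
    have h1 : K'.mulVec (y + H.mulVec c) = K'.mulVec y + c := by
      rw [Matrix.mulVec_add, hKc]
    simp only [h1, Matrix.mulVec_add]
    have h2 : H'.mulVec c = H.mulVec c := hH'c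
    have h3 : y + H.mulVec c - (H'.mulVec (K'.mulVec y) + H'.mulVec c)
        = y - H'.mulVec (K'.mulVec y) := by
      rw [h2]; abel
    rw [h3]
  · intro y
    rw [Matrix.mulVec_add, hKc]
end

section
/- (Multiple Branch MTD stealth attack) Suppose H' = H + Σ_{i∈S} Δb_i G_i where S ⊆ {1,…,l} indexes the MTD-protected edges, G_i = [H_i]_{·,{2,…,n+1}}, and the Δb_i ∈ ℝ are arbitrary. If c ∈ ℝⁿ satisfies, for every i ∈ S: c_{f(e_i)−1} = c_{t(e_i)−1} when neither endpoint is vertex 1, c_{t(e_i)−1} = 0 when f(e_i) = 1, and c_{f(e_i)−1} = 0 when t(e_i) = 1, then H c = H' c. -/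
open Matrix

/-- Multiple Branch MTD stealth attack. With
H' = H + Σ_{i∈S} Δbᵢ Gᵢ, where Gᵢ is the single-edge matrix with first column
deleted, any c satisfying the per-edge conditions on the protected edges
satisfies Hc = H'c. -/
theorem multiple_branch_mtd_stealth (l n : ℕ)
    (A : Matrix (Fin l) (Fin (n + 1)) ℝ)
    (f t : Fin l → Fin (n + 1)) (hft : ∀ i, f i ≠ t i)
    (hAf : ∀ i, A i (f i) = 1) (hAt : ∀ i, A i (t i) = -1)
    (hA0 : ∀ i j, j ≠ f i → j ≠ t i → A i j = 0)
    (S : Finset (Fin l)) (Δb : Fin l → ℝ)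
    (G : Fin l → Matrix (Fin (n + 1) ⊕ (Fin l ⊕ Fin l)) (Fin n) ℝ)
    (hG : ∀ i, G i = (Matrix.fromRows (Aᵀ * Matrix.single i i (1 : ℝ) * A)
        (Matrix.fromRows (Matrix.single i i (1 : ℝ) * A)
          (-(Matrix.single i i (1 : ℝ) * A)))).submatrix id Fin.succ)
    (H H' : Matrix (Fin (n + 1) ⊕ (Fin l ⊕ Fin l)) (Fin n) ℝ)
    (hH' : H' = H + ∑ i ∈ S, Δb i • G i)
    (c : Fin n → ℝ)
    (hc1 : ∀ i ∈ S, ∀ (hfi : f i ≠ 0) (hti : t i ≠ 0),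
      c ((f i).pred hfi) = c ((t i).pred hti))
    (hc2 : ∀ i ∈ S, f i = 0 → ∀ (hti : t i ≠ 0), c ((t i).pred hti) = 0)
    (hc3 : ∀ i ∈ S, t i = 0 → ∀ (hfi : f i ≠ 0), c ((f i).pred hfi) = 0) :
    H.mulVec c = H'.mulVec c := by
  have key : ∀ i ∈ S, (G i).mulVec c = 0 := by
    intro i hi
    set c' : Fin (n + 1) → ℝ := Fin.cases 0 c with hc'def
    have hc'ne : ∀ (j : Fin (n + 1)) (hj : j ≠ 0), c' j = c (j.pred hj) := by
      intro j hj
      obtain ⟨k, rfl⟩ := Fin.exists_succ_eq_of_ne_zero hj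
      simp [hc'def]
    have hA : ∀ j, A i j = (if j = f i then (1:ℝ) else 0) + (if j = t i then -1 else 0) := by
      intro j
      by_cases h1 : j = f i
      · subst h1
        simp [hAf i, if_neg (hft i)]
      · by_cases h2 : j = t i
        · subst h2
          simp [hAt i, h1]
        · simp [h1, h2, hA0 i j h1 h2]
    have hfteq : c' (f i) = c' (t i) := by
      by_cases hf0 : f i = 0
      · have ht0 : t i ≠ 0 := fun h => hft i (hf0.trans h.symm)
        rw [hf0, hc'ne (t i) ht0, hc2 i hi hf0 ht0]
        simp [hc'def]
      · by_cases ht0 : t i = 0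
        · rw [ht0, hc'ne (f i) hf0, hc3 i hi ht0 hf0]
          simp [hc'def]
        · rw [hc'ne (f i) hf0, hc'ne (t i) ht0]
          exact hc1 i hi hf0 ht0
    have hs : ∑ k : Fin n, A i k.succ * c k = 0 := by
      have h1 : ∑ k : Fin n, A i k.succ * c k = ∑ j : Fin (n + 1), A i j * c' j := by
        rw [Fin.sum_univ_succ]
        simp [hc'def]
      rw [h1]
      have h2 : ∀ j : Fin (n+1), A i j * c' j =
          (if j = f i then c' j else 0) + (if j = t i then -c' j else 0) := by
        intro j
        rw [hA j, add_mul]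
        by_cases hj1 : j = f i
        · by_cases hj2 : j = t i
          · exact absurd (hj1.symm.trans hj2) (hft i)
          · rw [if_pos hj1, if_neg hj2, if_pos hj1, if_neg hj2]; ring
        · by_cases hj2 : j = t i
          · rw [if_neg hj1, if_pos hj2, if_neg hj1, if_pos hj2]; ring
          · rw [if_neg hj1, if_neg hj2, if_neg hj1, if_neg hj2]; ring
      simp only [h2, Finset.sum_add_distrib, Finset.sum_ite_eq', Finset.mem_univ, if_true]
      rw [hfteq]; ring
    have hstd : ∀ (r : Fin l) (j : Fin (n+1)),
        (Matrix.single i i (1:ℝ) * A) r j = if r = i then A i j else 0 := by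
      intro r j
      rw [Matrix.mul_apply]
      by_cases h : r = i
      · rw [if_pos h]
        rw [Finset.sum_eq_single i (fun b _ hb => by
          simp [Matrix.single, h, Ne.symm hb]) (by simp)]
        simp [Matrix.single, h]
      · rw [if_neg h]
        apply Finset.sum_eq_zero
        intro b _
        simp only [Matrix.single, Matrix.of_apply]
        rw [if_neg (fun hh => h hh.1.symm), zero_mul]
    rw [hG]
    funext r
    rcases r with v | (v | v)
    · simp only [Matrix.mulVec, dotProduct, Matrix.submatrix_apply, id_eq,
        Matrix.fromRows_apply_inl, Pi.zero_apply]
      have hterm : ∀ k : Fin n, (Aᵀ * Matrix.single i i (1:ℝ) * A) v k.succ * c k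
          = A i v * (A i k.succ * c k) := by
        intro k
        rw [Matrix.mul_assoc, Matrix.mul_apply]
        rw [Finset.sum_eq_single i (fun b _ hb => by
          rw [hstd b k.succ, if_neg hb, mul_zero]) (by simp)]
        rw [hstd i k.succ, if_pos rfl, Matrix.transpose_apply]
        ring
      simp only [hterm, ← Finset.mul_sum, hs, mul_zero]
    · simp only [Matrix.mulVec, dotProduct, Matrix.submatrix_apply, id_eq,
        Matrix.fromRows_apply_inr, Matrix.fromRows_apply_inl, Pi.zero_apply]
      by_cases h : v = i
      · subst h
        simp only [hstd, eq_self_iff_true, if_true, if_pos rfl]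
        exact hs
      · simp only [hstd, if_neg h, zero_mul]
        exact Finset.sum_const_zero
    · simp only [Matrix.mulVec, dotProduct, Matrix.submatrix_apply, id_eq,
        Matrix.fromRows_apply_inr, Matrix.neg_apply, Pi.zero_apply]
      by_cases h : v = i
      · subst h
        simp only [hstd, eq_self_iff_true, if_true, if_pos rfl, neg_mul]
        have : ∑ k : Fin n, -(A v k.succ * c k) = -∑ k : Fin n, A v k.succ * c k :=
          Finset.sum_neg_distrib _
        rw [this, hs, neg_zero]
      · simp only [hstd, if_neg h, neg_zero, zero_mul]
        exact Finset.sum_const_zero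
  rw [hH', Matrix.add_mulVec]
  have hz : ∀ (T : Finset (Fin l)), (∀ i ∈ T, G i *ᵥ c = 0) →
      (∑ i ∈ T, Δb i • G i) *ᵥ c = 0 := by
    intro T
    induction T using Finset.induction_on with
    | empty => intro _; simp
    | @insert a T hx ih =>
      intro hT
      rw [Finset.sum_insert hx, Matrix.add_mulVec, Matrix.smul_mulVec,
        hT a (Finset.mem_insert_self a T),
        ih (fun i hi => hT i (Finset.mem_insert_of_mem hi))]
      simp
  rw [hz S key]
  simp
end

section
/- If the subgraph formed by the MTD-protected edges is a spanning tree of the connected power network graph, then no nonzero attack vector of the form a = Hc satisfying the stealth conditions of Theorem 3 exists; equivalently, every c ∈ ℝⁿ satisfying Hc = H'c for all choices of admittance perturbations Δb_i on the protected edges must be zero. -/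
open Matrix

/-- If the MTD-protected edges form a spanning tree of the
connected network graph, then every c with Hc = H'c for all choices of
(nonzero) admittance perturbations on the protected edges must be zero, i.e. no
nonzero MTD-resilient stealth attack a = Hc exists. -/
theorem spanning_tree_mtd_countermeasure (l n : ℕ)
    (A : Matrix (Fin l) (Fin (n + 1)) ℝ)
    (f t : Fin l → Fin (n + 1)) (hft : ∀ i, f i ≠ t i)
    (hAf : ∀ i, A i (f i) = 1) (hAt : ∀ i, A i (t i) = -1)
    (hA0 : ∀ i j, j ≠ f i → j ≠ t i → A i j = 0)
    (d : Fin l → ℝ) (hd : ∀ i, d i ≠ 0)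
    (hconn : (SimpleGraph.fromEdgeSet
        {s : Sym2 (Fin (n + 1)) | ∃ i : Fin l, s = s(f i, t i)}).Connected)
    (S : Finset (Fin l))
    (hT : (SimpleGraph.fromEdgeSet
        {s : Sym2 (Fin (n + 1)) | ∃ i ∈ S, s = s(f i, t i)}).IsTree)
    (G : Fin l → Matrix (Fin (n + 1) ⊕ (Fin l ⊕ Fin l)) (Fin n) ℝ)
    (hG : ∀ i, G i = (Matrix.fromRows (Aᵀ * Matrix.single i i (1 : ℝ) * A)
        (Matrix.fromRows (Matrix.single i i (1 : ℝ) * A)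
          (-(Matrix.single i i (1 : ℝ) * A)))).submatrix id Fin.succ)
    (H : Matrix (Fin (n + 1) ⊕ (Fin l ⊕ Fin l)) (Fin n) ℝ)
    (hH : H = (Matrix.fromRows (Aᵀ * Matrix.diagonal d * A)
        (Matrix.fromRows (Matrix.diagonal d * A)
          (-(Matrix.diagonal d * A)))).submatrix id Fin.succ)
    (c : Fin n → ℝ)
    (hstealth : ∀ Δb : Fin l → ℝ, (∀ i ∈ S, Δb i ≠ 0) →
      H.mulVec c = (H + ∑ i ∈ S, Δb i • G i).mulVec c) :
    c = 0 := by
  classical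
  set c' : Fin (n+1) → ℝ := Fin.cons 0 c with hc'
  -- Each protected edge measurement forces c'(f i) = c'(t i)
  have key : ∀ i ∈ S, c' (f i) = c' (t i) := by
    intro i hi
    have h1 := hstealth (fun _ => 1) (fun j _ => one_ne_zero)
    have h2 := hstealth (fun j => if j = i then 2 else 1) (by
      intro j hj; split <;> norm_num)
    rw [Matrix.add_mulVec] at h1 h2
    have e1 : (∑ j ∈ S, (1:ℝ) • G j).mulVec c = 0 := left_eq_add.mp h1
    have e2 : (∑ j ∈ S, (if j = i then (2:ℝ) else 1) • G j).mulVec c = 0 :=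
      left_eq_add.mp h2
    have hdiff : (∑ j ∈ S, (if j = i then (2:ℝ) else 1) • G j)
        - (∑ j ∈ S, (1:ℝ) • G j) = G i := by
      rw [← Finset.sum_sub_distrib]
      have : ∀ j ∈ S, ((if j = i then (2:ℝ) else 1) • G j - (1:ℝ) • G j)
          = (if j = i then G j else 0) := by
        intro j _
        split <;> simp_all <;> module
      rw [Finset.sum_congr rfl this, Finset.sum_ite_eq' S i G, if_pos hi]
    have hGzero : (G i).mulVec c = 0 := by
      rw [← hdiff, Matrix.sub_mulVec, e1, e2, sub_zero]
    have hrow := congrFun hGzero (Sum.inr (Sum.inl i))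
    rw [hG i] at hrow
    have hentry : ∀ k : Fin n,
        ((Matrix.fromRows (Aᵀ * Matrix.single i i (1 : ℝ) * A)
          (Matrix.fromRows (Matrix.single i i (1 : ℝ) * A)
            (-(Matrix.single i i (1 : ℝ) * A)))).submatrix id Fin.succ)
          (Sum.inr (Sum.inl i)) k = A i k.succ := by
      intro k
      simp [Matrix.submatrix_apply, Matrix.fromRows_apply_inr, Matrix.fromRows_apply_inl,
        Matrix.mul_apply, Matrix.single, ite_and]
    have hstd : ∀ j, (Matrix.single i i (1:ℝ) * A) i j = A i j := by
      intro j
      simp [Matrix.mul_apply, Matrix.single, ite_and]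
    have hsum : ∑ k : Fin n, A i k.succ * c k = 0 := by
      have := hrow
      rw [Matrix.mulVec, dotProduct] at this
      simpa [hentry, hstd] using this
    have hAval : ∀ j, A i j = (if j = f i then (1:ℝ) else 0)
        + (if j = t i then (-1:ℝ) else 0) := by
      intro j
      by_cases h1 : j = f i
      · subst h1; simp [hAf i, hft i]
      · by_cases h2 : j = t i
        · subst h2; simp [hAt i, (hft i).symm]
        · simp [h1, h2, hA0 i j h1 h2]
    have hbig : ∑ j : Fin (n+1), A i j * c' j = c' (f i) - c' (t i) := by
      have : ∀ j : Fin (n+1), A i j * c' j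
          = (if j = f i then c' j else 0) + (if j = t i then -(c' j) else 0) := by
        intro j; rw [hAval j]; ring_nf
        by_cases h1 : j = f i <;> by_cases h2 : j = t i <;> simp [h1, h2] <;> ring
      rw [Finset.sum_congr rfl (fun j _ => this j), Finset.sum_add_distrib,
        Finset.sum_ite_eq' Finset.univ (f i) c',
        Finset.sum_ite_eq' Finset.univ (t i) (fun j => -(c' j))]
      simp [sub_eq_add_neg]
    have hbig2 : ∑ j : Fin (n+1), A i j * c' j = ∑ k : Fin n, A i k.succ * c k := by
      rw [Fin.sum_univ_succ]
      simp [hc']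
    have : c' (f i) - c' (t i) = 0 := by rw [← hbig, hbig2, hsum]
    linarith [this]
  -- c' is constant along the spanning tree, hence equal to c' 0 = 0
  set T := SimpleGraph.fromEdgeSet
      {s : Sym2 (Fin (n + 1)) | ∃ i ∈ S, s = s(f i, t i)} with hTdef
  have hwalk : ∀ (u w : Fin (n+1)) (p : T.Walk u w), c' u = c' w := by
    intro u w p
    induction p with
    | nil => rfl
    | @cons a b e hadj q ih =>
      have hadj' := hadj
      rw [hTdef, SimpleGraph.fromEdgeSet_adj] at hadj'
      obtain ⟨⟨i, hi, hs⟩, hne⟩ := hadj'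
      have hcab : c' a = c' b := by
        rcases Sym2.eq_iff.mp hs with ⟨h1, h2⟩ | ⟨h1, h2⟩
        · rw [h1, h2]; exact key i hi
        · rw [h1, h2]; exact (key i hi).symm
      exact hcab.trans ih
  have hconst : ∀ v : Fin (n+1), c' v = c' 0 := by
    intro v
    obtain ⟨p⟩ := hT.isConnected.preconnected v 0
    exact hwalk v 0 p
  funext k
  have := hconst k.succ
  simpa [hc'] using this
end

section
/- If T ⊆ E is a set of edges such that the subgraph (V, T) is not connected (in particular if |T| < n for a graph on n+1 vertices), then there exists a nonzero vector c with c(1) = 0 that is constant along every edge of T; hence an MTD-resilient stealth attack a = Hc ≠ 0 exists. -/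
/-!
Take `c` to be the indicator of the component of `(V, T)` of a vertex `w` that `T` does not
connect to the reference vertex `0`. It vanishes at `0` and is constant along `T`. Since the whole
network is connected, some line `i` has exactly one end in that component, and the flow entry
`d i * (c (f i) - c (t i))` of `H c` is then nonzero.
-/

open Matrix

namespace SimpleGraph

variable {V : Type*} {G : SimpleGraph V}

theorem exists_not_reachable_of_not_connected (h : ¬G.Connected) (v : V) :
    ∃ w, ¬G.Reachable v w := by
  simp only [connected_iff_exists_forall_reachable, not_exists, not_forall] at h
  exact h v

theorem Reachable.exists_adj_ne {β : Type*} (c : V → β) {u v : V} (h : G.Reachable u v)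
    (hc : c u ≠ c v) : ∃ a b, G.Adj a b ∧ c a ≠ c b := by
  obtain ⟨p⟩ := h
  obtain ⟨d, -, hd_fst, hd_snd⟩ := p.exists_boundary_dart {x | c x = c u} rfl (Ne.symm hc)
  exact ⟨d.fst, d.snd, d.adj, fun h => hd_snd (h.symm.trans hd_fst)⟩

theorem ConnectedComponent.indicator_supp_eq_of_adj {M : Type*} [Zero M]
    (C : G.ConnectedComponent) (a : M) {x y : V} (hxy : G.Adj x y) :
    C.supp.indicator (fun _ => a) x = C.supp.indicator (fun _ => a) y := by
  by_cases hx : x ∈ C.supp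
  · rw [Set.indicator_of_mem hx, Set.indicator_of_mem ((C.mem_supp_congr_adj hxy).1 hx)]
  · rw [Set.indicator_of_notMem hx,
      Set.indicator_of_notMem (fun hy => hx ((C.mem_supp_congr_adj hxy).2 hy))]

theorem exists_edge_ne_of_reachable_fromEdgeSet {ι β : Type*} (f t : ι → V) (c : V → β)
    {u v : V} (h : (fromEdgeSet {s | ∃ i, s = s(f i, t i)}).Reachable u v) (hc : c u ≠ c v) :
    ∃ i, c (f i) ≠ c (t i) := by
  obtain ⟨a, b, hab, hcab⟩ := h.exists_adj_ne c hc
  obtain ⟨⟨i, hi⟩, -⟩ := fromEdgeSet_adj _ |>.1 hab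
  refine ⟨i, ?_⟩
  rcases Sym2.eq_iff.1 hi with ⟨rfl, rfl⟩ | ⟨rfl, rfl⟩
  · exact hcab
  · exact Ne.symm hcab

end SimpleGraph

namespace Matrix

theorem dotProduct_eq_sub_of_incidence {m R : Type*} [Fintype m] [DecidableEq m] [Ring R]
    {r : m → R} {p q : m} (hpq : p ≠ q) (hp : r p = 1) (hq : r q = -1)
    (h0 : ∀ j, j ≠ p → j ≠ q → r j = 0) (c : m → R) : r ⬝ᵥ c = c p - c q := by
  have hr : r = Pi.single p 1 - Pi.single q 1 := by
    funext j
    by_cases hjp : j = p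
    · subst hjp; simp [hp, hpq]
    by_cases hjq : j = q
    · subst hjq; simp [hq, hjp]
    · simp [h0 j hjp hjq, hjp, hjq]
  rw [hr, sub_dotProduct, single_one_dotProduct, single_one_dotProduct]

theorem submatrix_succ_mulVec {ι R : Type*} [NonUnitalNonAssocSemiring R] {n : ℕ}
    (M : Matrix ι (Fin (n + 1)) R) {c : Fin (n + 1) → R} (hc : c 0 = 0) :
    M.submatrix id Fin.succ *ᵥ (fun i => c i.succ) = M *ᵥ c := by
  ext x
  simp [mulVec, dotProduct, Fin.sum_univ_succ, hc]

end Matrix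

/-- If the subgraph of protected edges T is not connected, there
is a nonzero vertex function c vanishing at the reference (vertex 0) and
constant along every edge of T; hence a nonzero MTD-resilient stealth attack
a = Hc ≠ 0 exists (H being the reduced Jacobian of the connected network). -/
theorem disconnected_protection_admits_stealth (l n : ℕ)
    (A : Matrix (Fin l) (Fin (n + 1)) ℝ)
    (f t : Fin l → Fin (n + 1)) (hft : ∀ i, f i ≠ t i)
    (hAf : ∀ i, A i (f i) = 1) (hAt : ∀ i, A i (t i) = -1)
    (hA0 : ∀ i j, j ≠ f i → j ≠ t i → A i j = 0)
    (d : Fin l → ℝ) (hd : ∀ i, d i ≠ 0)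
    (hconn : (SimpleGraph.fromEdgeSet
        {s : Sym2 (Fin (n + 1)) | ∃ i : Fin l, s = s(f i, t i)}).Connected)
    (H : Matrix (Fin (n + 1) ⊕ (Fin l ⊕ Fin l)) (Fin n) ℝ)
    (hH : H = (Matrix.fromRows (Aᵀ * Matrix.diagonal d * A)
        (Matrix.fromRows (Matrix.diagonal d * A)
          (-(Matrix.diagonal d * A)))).submatrix id Fin.succ)
    (T : Finset (Fin l))
    (hdisc : ¬ (SimpleGraph.fromEdgeSet
        {s : Sym2 (Fin (n + 1)) | ∃ e ∈ T, s = s(f e, t e)}).Connected) :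
    ∃ c : Fin (n + 1) → ℝ, c ≠ 0 ∧ c 0 = 0 ∧
      (∀ e ∈ T, c (f e) = c (t e)) ∧
      H.mulVec (fun i : Fin n => c i.succ) ≠ 0 := by
  classical
  set GT := SimpleGraph.fromEdgeSet {s : Sym2 (Fin (n + 1)) | ∃ e ∈ T, s = s(f e, t e)}
  obtain ⟨w, hw⟩ := SimpleGraph.exists_not_reachable_of_not_connected hdisc 0
  set C := GT.connectedComponentMk w
  set c : Fin (n + 1) → ℝ := C.supp.indicator 1
  have hc0 : c 0 = 0 :=
    Set.indicator_of_notMem (s := C.supp) (fun h => hw (SimpleGraph.ConnectedComponent.eq.1 h)) 1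
  have hcw : c w = 1 := Set.indicator_of_mem (s := C.supp) rfl 1
  have hcT : ∀ e ∈ T, c (f e) = c (t e) := fun e he =>
    C.indicator_supp_eq_of_adj 1
      ((SimpleGraph.fromEdgeSet_adj _).2 ⟨⟨e, he, rfl⟩, hft e⟩)
  obtain ⟨i, hi⟩ := SimpleGraph.exists_edge_ne_of_reachable_fromEdgeSet f t c
    (hconn.preconnected 0 w) (by simp [hc0, hcw])
  refine ⟨c, fun h => one_ne_zero (hcw.symm.trans (congrFun h w)), hc0, hcT, fun hzero => ?_⟩
  have hflow := congrFun hzero (Sum.inr (Sum.inl i))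
  rw [hH, submatrix_succ_mulVec _ hc0, fromRows_mulVec, fromRows_mulVec] at hflow
  simp only [Sum.elim_inr, Sum.elim_inl, ← mulVec_mulVec, mulVec_diagonal, Pi.zero_apply] at hflow
  change d i * (A i ⬝ᵥ c) = 0 at hflow
  rw [dotProduct_eq_sub_of_incidence (hft i) (hAf i) (hAt i) (hA0 i) c] at hflow
  exact hi (sub_eq_zero.1 ((mul_eq_zero.1 hflow).resolve_left (hd i)))
end
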